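/- arXiv:1412.2253 — 5 statements merged into one kernel-verified Lean document; each statement's English description precedes it below -/
import Mathlib

section
/- Let A be a nontrivial pseudo BL-algebra in which every maximal filter is normal, and let x₁, …, xₙ ∈ A (n ≥ 1). If for every maximal filter V of A one has (x₁·x₂·⋯·xₙ)⁻ ∈ V (i.e., the class of x₁·⋯·xₙ coincides with the class of 0 in the quotient of A by V), then x₁²·x₂²·⋯·xₙ² = 0. -/
/-- A pseudo BL-algebra: a bounded lattice `(A; ∨, ∧, 0, 1)` together with a monoid
structure `(A; ·, 1)` and two residua `→` (`himp`) and `⇝` (`rimp`) satisfying the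
residuation, divisibility and prelinearity conditions. -/
class PseudoBL (A : Type*) extends Lattice A, Monoid A, Zero A where
  himp : A → A → A
  rimp : A → A → A
  zero_le : ∀ x : A, (0 : A) ≤ x
  le_one : ∀ x : A, x ≤ 1
  mul_le_iff_himp : ∀ x y z : A, x * y ≤ z ↔ x ≤ himp y z
  mul_le_iff_rimp : ∀ x y z : A, x * y ≤ z ↔ y ≤ rimp x z
  himp_mul_inf : ∀ x y : A, himp x y * x = x ⊓ y
  mul_rimp_inf : ∀ x y : A, y * rimp y x = x ⊓ y
  prelin_himp : ∀ x y : A, himp x y ⊔ himp y x = 1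
  prelin_rimp : ∀ x y : A, rimp x y ⊔ rimp y x = 1

namespace PseudoBL

variable {A : Type*} [PseudoBL A]

/-- The left negation `x⁻ := x → 0`. -/
def lneg (x : A) : A := himp x 0

/-- A filter: a nonempty subset closed under `·` and upward closed. -/
def IsFilter (F : Set A) : Prop :=
  F.Nonempty ∧ (∀ x ∈ F, ∀ y ∈ F, x * y ∈ F) ∧ ∀ x ∈ F, ∀ y : A, x ≤ y → y ∈ F

/-- A maximal filter: a proper filter not properly contained in any proper filter. -/
def IsMaximalFilter (F : Set A) : Prop :=
  IsFilter F ∧ F ≠ Set.univ ∧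
    ∀ G : Set A, IsFilter G → G ≠ Set.univ → F ⊆ G → F = G

/-- A normal filter: `x→y ∈ F` iff `x⇝y ∈ F`. -/
def IsNormalFilter (F : Set A) : Prop :=
  ∀ x y : A, himp x y ∈ F ↔ rimp x y ∈ F

end PseudoBL

namespace PseudoBL

variable {A : Type*} [PseudoBL A]

-- ===== auxiliary development =====

lemma mul_le_mul_left' {c d : A} (h : c ≤ d) (a : A) : a * c ≤ a * d := by
  rw [mul_le_iff_rimp]
  exact h.trans ((mul_le_iff_rimp a d (a * d)).mp le_rfl)

lemma mul_le_mul_right' {c d : A} (h : c ≤ d) (a : A) : c * a ≤ d * a := by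
  have h1 : d ≤ himp a (d * a) := (mul_le_iff_himp d a (d * a)).mp le_rfl
  exact (mul_le_iff_himp c a (d * a)).mpr (h.trans h1)

lemma mul_le_mul'' {a b c d : A} (h1 : a ≤ b) (h2 : c ≤ d) : a * c ≤ b * d :=
  (mul_le_mul_right' h1 c).trans (mul_le_mul_left' h2 b)

lemma mul_le_left' (x y : A) : x * y ≤ x := by
  simpa using mul_le_mul_left' (le_one y) x

lemma mul_le_right' (x y : A) : x * y ≤ y := by
  simpa using mul_le_mul_right' (le_one x) y

lemma inf_zero' (x : A) : x ⊓ 0 = 0 :=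
  le_antisymm inf_le_right (le_inf (zero_le x) le_rfl)

lemma lneg_mul_self (x : A) : lneg x * x = 0 := by
  rw [lneg, himp_mul_inf, inf_zero']

lemma lneg_anti {x y : A} (h : x ≤ y) : lneg y ≤ lneg x := by
  simp only [lneg]
  rw [← mul_le_iff_himp]
  calc lneg y * x ≤ lneg y * y := mul_le_mul_left' h _
    _ = 0 := lneg_mul_self y

lemma himp_mul_assoc (p q r : A) : himp (p * q) r = himp p (himp q r) := by
  apply le_antisymm
  · rw [← mul_le_iff_himp, ← mul_le_iff_himp, mul_assoc]
    have := himp_mul_inf (p * q) r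
    calc himp (p*q) r * (p * q) = (p*q) ⊓ r := himp_mul_inf (p*q) r
      _ ≤ r := inf_le_right
  · rw [← mul_le_iff_himp]
    calc himp p (himp q r) * (p * q) = (himp p (himp q r) * p) * q := (mul_assoc _ _ _).symm
      _ = (p ⊓ himp q r) * q := by rw [himp_mul_inf]
      _ ≤ himp q r * q := mul_le_mul_right' inf_le_right q
      _ = q ⊓ r := himp_mul_inf q r
      _ ≤ r := inf_le_right

lemma mul_sup' (x y z : A) : x * (y ⊔ z) = x * y ⊔ x * z := by
  apply le_antisymm
  · rw [mul_le_iff_rimp]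
    exact sup_le ((mul_le_iff_rimp _ _ _).mp le_sup_left)
      ((mul_le_iff_rimp _ _ _).mp le_sup_right)
  · exact sup_le (mul_le_mul_left' le_sup_left x) (mul_le_mul_left' le_sup_right x)

lemma sup_mul' (x y z : A) : (y ⊔ z) * x = y * x ⊔ z * x := by
  apply le_antisymm
  · rw [mul_le_iff_himp]
    exact sup_le ((mul_le_iff_himp _ _ _).mp le_sup_left)
      ((mul_le_iff_himp _ _ _).mp le_sup_right)
  · exact sup_le (mul_le_mul_right' le_sup_left x) (mul_le_mul_right' le_sup_right x)

-- filters

lemma one_mem_filter {F : Set A} (hF : IsFilter F) : (1 : A) ∈ F := by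
  obtain ⟨a, ha⟩ := hF.1
  exact hF.2.2 a ha 1 (le_one a)

lemma filter_eq_univ {F : Set A} (hF : IsFilter F) (h0 : (0 : A) ∈ F) : F = Set.univ := by
  ext y; simp only [Set.mem_univ, iff_true]
  exact hF.2.2 0 h0 y (zero_le y)

def Fgen (τ : A) : Set A := {c | ∃ k : ℕ, τ ^ k ≤ c}

lemma isFilter_Fgen (τ : A) : IsFilter (Fgen τ) := by
  refine ⟨⟨1, 0, by simp⟩, ?_, ?_⟩
  · rintro a ⟨k, hk⟩ b ⟨m, hm⟩
    exact ⟨k + m, by rw [pow_add]; exact mul_le_mul'' hk hm⟩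
  · rintro a ⟨k, hk⟩ b hab
    exact ⟨k, hk.trans hab⟩

lemma exists_maximal_filter (τ : A) (h0 : (0 : A) ∉ Fgen τ) :
    ∃ V : Set A, IsMaximalFilter V ∧ τ ∈ V := by
  set S : Set (Set A) := {F | IsFilter F ∧ (0 : A) ∉ F ∧ Fgen τ ⊆ F} with hS
  have hzorn := zorn_subset_nonempty S ?_ (Fgen τ) ⟨isFilter_Fgen τ, h0, le_rfl⟩
  · obtain ⟨M, hsub, hM⟩ := hzorn
    obtain ⟨⟨hMf, hM0, hMg⟩, hmax⟩ := hM
    have hMne : M ≠ Set.univ := fun he => hM0 (he ▸ Set.mem_univ 0)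
    refine ⟨M, ⟨hMf, hMne, ?_⟩, hsub ⟨1, le_of_eq (pow_one τ)⟩⟩
    intro G hG hGne hMG
    have hG0 : (0 : A) ∉ G := fun h => hGne (filter_eq_univ hG h)
    exact Set.Subset.antisymm hMG (hmax ⟨hG, hG0, hMg.trans hMG⟩ hMG)
  · intro c hcS hchain hcne
    obtain ⟨F0, hF0⟩ := hcne
    refine ⟨⋃₀ c, ⟨⟨⟨1, Set.mem_sUnion.mpr ⟨F0, hF0, one_mem_filter (hcS hF0).1⟩⟩, ?_, ?_⟩, ?_, ?_⟩, fun s hs => Set.subset_sUnion_of_mem hs⟩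
    · rintro a ⟨Fa, hFa, haa⟩ b ⟨Fb, hFb, hbb⟩
      rcases hchain.total hFa hFb with hab | hba
      · exact ⟨Fb, hFb, (hcS hFb).1.2.1 a (hab haa) b hbb⟩
      · exact ⟨Fa, hFa, (hcS hFa).1.2.1 a haa b (hba hbb)⟩
    · rintro a ⟨Fa, hFa, haa⟩ b hab
      exact ⟨Fa, hFa, (hcS hFa).1.2.2 a haa b hab⟩
    · rintro ⟨Fa, hFa, h0a⟩
      exact (hcS hFa).2.1 h0a
    · exact (hcS hF0).2.2.trans (Set.subset_sUnion_of_mem hF0)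

-- lists

def sqp (l : List A) : A := (l.map (fun y => y * y)).prod

def tlist : List A → List A
  | [] => []
  | y :: l => himp (lneg (y * sqp l)) y :: tlist l

lemma sqp_nil : sqp ([] : List A) = 1 := rfl

lemma sqp_cons (y : A) (l : List A) : sqp (y :: l) = y * (y * sqp l) := by
  simp [sqp, mul_assoc]

lemma sqp_cons_le (y : A) (l : List A) : sqp (y :: l) ≤ sqp l := by
  rw [sqp_cons]
  exact (mul_le_right' y (y * sqp l)).trans (mul_le_right' y (sqp l))

lemma sqp_le_prod (l : List A) : sqp l ≤ l.prod := by
  induction l with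
  | nil => simp [sqp_nil]
  | cons y l ih =>
    rw [sqp_cons, List.prod_cons]
    calc y * (y * sqp l) ≤ y * (y * l.prod) := mul_le_mul_left' (mul_le_mul_left' ih y) y
      _ ≤ y * (1 * l.prod) := mul_le_mul_left' (mul_le_mul_right' (le_one y) _) y
      _ = y * l.prod := by rw [one_mul]

lemma prod_le_of_mem {t : A} {l : List A} (h : t ∈ l) : l.prod ≤ t := by
  induction l with
  | nil => simp at h
  | cons y l ih =>
    rw [List.prod_cons]
    rcases List.mem_cons.mp h with rfl | h'
    · exact mul_le_left' _ _
    · exact (mul_le_right' _ _).trans (ih h')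

-- Claim 1

lemma claim1 : ∀ (l : List A) (V : Set A), IsMaximalFilter V →
    lneg l.prod ∈ V → (∀ t ∈ tlist l, t ∈ V) → False := by
  intro l
  induction l with
  | nil =>
    intro V hV h0 _
    have h1 : lneg (1 : A) = (0 : A) := by
      have e1 : lneg (1 : A) = (1 : A) ⊓ 0 := by rw [lneg, ← himp_mul_inf, mul_one]
      rw [e1, inf_zero']
    rw [List.prod_nil, h1] at h0
    exact hV.2.1 (filter_eq_univ hV.1 h0)
  | cons y l ih =>
    intro V hV h0 ht
    have hwle : y * sqp l ≤ (y :: l).prod := by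
      rw [List.prod_cons]; exact mul_le_mul_left' (sqp_le_prod l) y
    have hw : lneg (y * sqp l) ∈ V := hV.1.2.2 _ h0 _ (lneg_anti hwle)
    have hty : himp (lneg (y * sqp l)) y ∈ V := ht _ (by simp [tlist])
    have hmul : himp (lneg (y * sqp l)) y * lneg (y * sqp l) ∈ V := hV.1.2.1 _ hty _ hw
    have hy : y ∈ V := by
      refine hV.1.2.2 _ hmul y ?_
      rw [himp_mul_inf]; exact inf_le_right
    have h2 : lneg ((y :: l).prod) * y ≤ lneg l.prod := by
      have hp : (lneg ((y :: l).prod) * y) * l.prod ≤ 0 := by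
        rw [mul_assoc, ← List.prod_cons (a := y)]
        exact le_of_eq (lneg_mul_self _)
      exact (mul_le_iff_himp _ _ _).mp hp
    have h3 : lneg l.prod ∈ V := hV.1.2.2 _ (hV.1.2.1 _ h0 _ hy) _ h2
    exact ih V hV h3 (fun t htl => ht t (by simp [tlist, htl]))

-- the join lemma

lemma J0 : ∀ l : List A, (1 : A) ≤ lneg (sqp l) ⊔ (tlist l).prod := by
  intro l
  induction l with
  | nil => simp [tlist]
  | cons y l ih =>
    have hst : himp y (lneg (y * sqp l)) ⊔ himp (lneg (y * sqp l)) y = 1 := prelin_himp _ _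
    have hS : lneg (sqp (y :: l)) = himp y (lneg (y * sqp l)) := by
      rw [sqp_cons, lneg, lneg, himp_mul_assoc]
    have hT : (tlist (y :: l)).prod = himp (lneg (y * sqp l)) y * (tlist l).prod := by
      simp [tlist]
    have hS' : lneg (sqp l) ≤ himp y (lneg (y * sqp l)) :=
      (lneg_anti (sqp_cons_le y l)).trans hS.le
    rw [hS, hT]
    calc (1 : A) = (himp y (lneg (y * sqp l)) ⊔ himp (lneg (y * sqp l)) y) * 1 := by
          rw [hst, one_mul]
      _ ≤ (himp y (lneg (y * sqp l)) ⊔ himp (lneg (y * sqp l)) y) *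
            (lneg (sqp l) ⊔ (tlist l).prod) := mul_le_mul_left' ih _
      _ = (himp y (lneg (y * sqp l)) * lneg (sqp l) ⊔ himp y (lneg (y * sqp l)) * (tlist l).prod)
            ⊔ (himp (lneg (y * sqp l)) y * lneg (sqp l) ⊔ himp (lneg (y * sqp l)) y * (tlist l).prod) := by
          rw [sup_mul', mul_sup', mul_sup']
      _ ≤ himp y (lneg (y * sqp l)) ⊔ himp (lneg (y * sqp l)) y * (tlist l).prod := by
          refine sup_le (sup_le ?_ ?_) (sup_le ?_ ?_)
          · exact le_sup_of_le_left (mul_le_left' _ _)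
          · exact le_sup_of_le_left (mul_le_left' _ _)
          · exact le_sup_of_le_left ((mul_le_right' _ _).trans hS')
          · exact le_sup_right

lemma Jpow (l : List A) : ∀ k : ℕ, (1 : A) ≤ lneg (sqp l) ⊔ ((tlist l).prod) ^ k := by
  intro k
  induction k with
  | zero => simp
  | succ m ihm =>
    set S := lneg (sqp l)
    set T := (tlist l).prod
    calc (1 : A) = 1 * 1 := (one_mul 1).symm
      _ ≤ (S ⊔ T) * (S ⊔ T ^ m) := mul_le_mul'' (J0 l) ihm
      _ = (S * (S ⊔ T ^ m)) ⊔ (T * (S ⊔ T ^ m)) := sup_mul' _ _ _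
      _ = (S * S ⊔ S * T ^ m) ⊔ (T * S ⊔ T * T ^ m) := by rw [mul_sup', mul_sup']
      _ ≤ S ⊔ T ^ (m + 1) := by
          refine sup_le (sup_le ?_ ?_) (sup_le ?_ ?_)
          · exact le_sup_of_le_left (mul_le_left' S S)
          · exact le_sup_of_le_left (mul_le_left' S _)
          · exact le_sup_of_le_left (mul_le_right' T S)
          · exact le_sup_of_le_right (le_of_eq (pow_succ' T m).symm)

-- the core lemma

lemma core (l : List A) (h : ∀ V : Set A, IsMaximalFilter V → lneg l.prod ∈ V) :
    sqp l = 0 := by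
  set T := (tlist l).prod with hT
  have h0 : (0 : A) ∈ Fgen T := by
    by_contra h0
    obtain ⟨V, hV, hTV⟩ := exists_maximal_filter T h0
    refine claim1 l V hV (h V hV) (fun t htl => ?_)
    exact hV.1.2.2 _ hTV _ (prod_le_of_mem htl)
  obtain ⟨k, hk⟩ := h0
  have h1 : (1 : A) ≤ lneg (sqp l) := by
    have := Jpow l k
    have h2 : lneg (sqp l) ⊔ T ^ k ≤ lneg (sqp l) ⊔ 0 := sup_le_sup_left hk _
    have h3 : lneg (sqp l) ⊔ (0:A) = lneg (sqp l) := sup_eq_left.mpr (zero_le _)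
    exact this.trans (h2.trans_eq h3)
  have h4 : sqp l ≤ 0 := by
    have := (mul_le_iff_himp 1 (sqp l) 0).mpr (h1.trans_eq rfl)
    simpa using this
  exact le_antisymm h4 (zero_le _)

end PseudoBL

open PseudoBL

/-- In a nontrivial pseudo BL-algebra where every maximal filter is
normal, if `(x₁⋯xₙ)⁻` lies in every maximal filter, then `x₁²⋯xₙ² = 0`. -/
theorem stmt_0 {A : Type*} [PseudoBL A] (hnt : (0 : A) ≠ 1)
    (hnorm : ∀ F : Set A, IsMaximalFilter F → IsNormalFilter F)
    (n : ℕ) (hn : 1 ≤ n) (x : Fin n → A)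
    (h : ∀ V : Set A, IsMaximalFilter V → lneg (List.ofFn x).prod ∈ V) :
    (List.ofFn (fun i => x i ^ 2)).prod = 0 := by
  have hgoal : (List.ofFn (fun i => x i ^ 2)) = (List.ofFn x).map (fun y => y * y) := by
    rw [List.map_ofFn]
    congr 1
    funext i
    simp [Function.comp, pow_two]
  rw [hgoal]
  exact PseudoBL.core (List.ofFn x) h
end

section
/- Let A be a pseudo BL-algebra satisfying, for all n ≥ 1, all elements and all permutations π of {1, …, n}, the inequalities: (i) ((x₁·⋯·xₙ)⁻)² ≤ (x_{π(1)}²·⋯·x_{π(n)}²)⁻; (ii) (((x→y)ⁿ)⁻)² ≤ ((x⇝y)^{2n})⁻; (iii) (((x⇝y)ⁿ)⁻)² ≤ ((x→y)^{2n})⁻. Then every maximal filter of A is normal. -/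
namespace PseudoBL

variable {A : Type*} [PseudoBL A]

instance : MulLeftMono A where
  elim _ _ _ h := (mul_le_iff_rimp _ _ _).2 (h.trans ((mul_le_iff_rimp _ _ _).1 le_rfl))

instance : MulRightMono A where
  elim _ _ _ h := (mul_le_iff_himp _ _ _).2 (h.trans ((mul_le_iff_himp _ _ _).1 le_rfl))

lemma eq_zero_of_le_zero {x : A} (h : x ≤ 0) : x = 0 :=
  le_antisymm h (zero_le x)

lemma le_lneg_iff {x y : A} : x ≤ lneg y ↔ x * y = 0 :=
  (mul_le_iff_himp x y 0).symm.trans ⟨eq_zero_of_le_zero, le_of_eq⟩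

lemma lneg_zero : lneg (0 : A) = 1 :=
  le_antisymm (le_one _) (le_lneg_iff.2 (one_mul 0))

lemma eq_zero_of_one_le_lneg {x : A} (h : 1 ≤ lneg x) : x = 0 := by
  simpa using le_lneg_iff.1 h

namespace IsFilter

variable {F : Set A}

lemma mul_mem (hF : IsFilter F) {x y : A} (hx : x ∈ F) (hy : y ∈ F) : x * y ∈ F :=
  hF.2.1 x hx y hy

lemma mem_of_le (hF : IsFilter F) {x y : A} (hx : x ∈ F) (hxy : x ≤ y) : y ∈ F :=
  hF.2.2 x hx y hxy

lemma one_mem (hF : IsFilter F) : (1 : A) ∈ F :=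
  let ⟨x, hx⟩ := hF.1
  hF.mem_of_le hx (le_one x)

lemma pow_mem (hF : IsFilter F) {x : A} (hx : x ∈ F) : ∀ n : ℕ, x ^ n ∈ F
  | 0 => by simpa using hF.one_mem
  | n + 1 => by rw [pow_succ]; exact hF.mul_mem (hF.pow_mem hx n) hx

lemma list_prod_mem (hF : IsFilter F) {l : List A} (hl : ∀ t ∈ l, t ∈ F) : l.prod ∈ F := by
  induction l with
  | nil => simpa using hF.one_mem
  | cons a l ih =>
    simp only [List.forall_mem_cons] at hl
    simpa using hF.mul_mem hl.1 (ih hl.2)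

lemma zero_notMem (hF : IsFilter F) (hne : F ≠ Set.univ) : (0 : A) ∉ F :=
  fun h0 => hne (Set.eq_univ_of_forall fun y => hF.mem_of_le h0 (zero_le y))

end IsFilter

def filterClosure (S : Set A) : Set A :=
  {z | ∃ l : List A, (∀ t ∈ l, t ∈ S) ∧ l.prod ≤ z}

lemma isFilter_filterClosure (S : Set A) : IsFilter (filterClosure S) := by
  refine ⟨⟨1, [], by simp, by simp⟩, ?_, ?_⟩
  · rintro x ⟨l₁, hl₁, hx⟩ y ⟨l₂, hl₂, hy⟩
    refine ⟨l₁ ++ l₂, fun t ht => ?_, ?_⟩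
    · rcases List.mem_append.1 ht with ht | ht
      exacts [hl₁ t ht, hl₂ t ht]
    · rw [List.prod_append]
      exact mul_le_mul' hx hy
  · rintro x ⟨l, hl, hx⟩ y hxy
    exact ⟨l, hl, hx.trans hxy⟩

lemma subset_filterClosure (S : Set A) : S ⊆ filterClosure S :=
  fun s hs => ⟨[s], by simpa using hs, by simp⟩

lemma IsMaximalFilter.exists_prod_eq_zero {F : Set A} (hF : IsMaximalFilter F) {a : A}
    (ha : a ∉ F) : ∃ l : List A, (∀ t ∈ l, t ∈ insert a F) ∧ l.prod = 0 := by
  have hsub := subset_filterClosure (insert a F)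
  have hG : filterClosure (insert a F) = Set.univ := by
    by_contra hne
    have := hF.2.2 _ (isFilter_filterClosure _) hne ((Set.subset_insert a F).trans hsub)
    exact ha (this ▸ hsub (Set.mem_insert a F))
  obtain ⟨l, hl, h0⟩ : (0 : A) ∈ filterClosure (insert a F) := hG ▸ Set.mem_univ 0
  exact ⟨l, hl, eq_zero_of_le_zero h0⟩

lemma _root_.List.Perm.exists_perm_ofFn_eq {α : Type*} {l l' : List α} (h : l.Perm l') :
    ∃ π : Equiv.Perm (Fin l.length), List.ofFn (fun i => l.get (π i)) = l' := by
  classical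
  let e : Fin l'.length ≃ Fin l.length :=
    ⟨h.symm.idxBij, h.idxBij, h.idxBij_leftInverse_idxBij_symm,
      h.idxBij_rightInverse_idxBij_symm⟩
  refine ⟨(finCongr h.length_eq).trans e, List.ext_getElem (by simp [h.length_eq]) ?_⟩
  intro i _ _
  simp [e]

/-- Condition (i). -/
def PermSquareCondition (A : Type*) [PseudoBL A] : Prop :=
  ∀ (n : ℕ), 1 ≤ n → ∀ (x : Fin n → A) (π : Equiv.Perm (Fin n)),
    lneg (List.ofFn x).prod ^ 2 ≤ lneg (List.ofFn (fun i => x (π i) ^ 2)).prod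

lemma lneg_prod_sq_le_of_perm (h1 : PermSquareCondition A)
    {l l' : List A} (hl : l ≠ []) (h : l.Perm l') :
    lneg l.prod ^ 2 ≤ lneg (l'.map (· ^ 2)).prod := by
  obtain ⟨π, hπ⟩ := h.exists_perm_ofFn_eq
  have := h1 l.length (List.length_pos_iff.2 hl) l.get π
  rw [List.ofFn_get] at this
  rwa [← hπ, List.map_ofFn]

lemma IsFilter.lneg_pow_notMem {F : Set A} (hF : IsFilter F) (hne : F ≠ Set.univ) {b : A}
    (hb : b ∈ F) (k : ℕ) : lneg (b ^ k) ∉ F := fun h =>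
  hF.zero_notMem hne (lneg_mul_self (b ^ k) ▸ hF.mul_mem h (hF.pow_mem hb k))

lemma IsMaximalFilter.exists_lneg_pow_mem (h1 : PermSquareCondition A)
    {F : Set A} (hF : IsMaximalFilter F) {a : A} (ha : a ∉ F) :
    ∃ m, 1 ≤ m ∧ lneg (a ^ m) ∈ F := by
  classical
  have hzero := hF.1.zero_notMem hF.2.1
  obtain ⟨l, hl, h0⟩ := hF.exists_prod_eq_zero ha
  have hl_ne : l ≠ [] := by
    rintro rfl
    rw [List.prod_nil] at h0
    exact hzero (h0 ▸ hF.1.one_mem)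
  set p := l.filter (· ∈ F)
  set q := l.filter (fun t => !decide (t ∈ F))
  have hq : q = List.replicate q.length a := List.eq_replicate_iff.2 ⟨rfl, fun t ht => by
    simp only [q, List.mem_filter, Bool.not_eq_true', decide_eq_false_iff_not] at ht
    exact (hl t ht.1).resolve_right ht.2⟩
  have hp : (p.map (· ^ 2)).prod ∈ F := hF.1.list_prod_mem fun t ht => by
    simp only [p, List.mem_map, List.mem_filter, decide_eq_true_eq] at ht
    obtain ⟨s, ⟨-, hs⟩, rfl⟩ := ht
    exact hF.1.pow_mem hs 2
  have hprod : (p.map (· ^ 2)).prod * a ^ (2 * q.length) = 0 := by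
    have hperm : l.Perm (p ++ q) := (List.filter_append_perm _ l).symm
    have := lneg_prod_sq_le_of_perm h1 hl_ne hperm
    rw [h0, lneg_zero, one_pow, List.map_append, List.prod_append, hq] at this
    simpa [pow_mul] using eq_zero_of_one_le_lneg this
  refine ⟨2 * q.length, ?_, hF.1.mem_of_le hp (le_lneg_iff.2 hprod)⟩
  rcases Nat.eq_zero_or_pos q.length with hk | hk
  · rw [hk, mul_zero, pow_zero, mul_one] at hprod
    exact absurd (hprod ▸ hp) hzero
  · omega

lemma IsMaximalFilter.mem_of_lneg_pow_sq_le (h1 : PermSquareCondition A)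
    {F : Set A} (hF : IsMaximalFilter F) {a b : A} (hb : b ∈ F)
    (hab : ∀ m, 1 ≤ m → lneg (a ^ m) ^ 2 ≤ lneg (b ^ (2 * m))) : a ∈ F := by
  by_contra ha
  obtain ⟨m, hm, hneg⟩ := hF.exists_lneg_pow_mem h1 ha
  exact hF.1.lneg_pow_notMem hF.2.1 hb (2 * m) (hF.1.mem_of_le (hF.1.pow_mem hneg 2) (hab m hm))

end PseudoBL

open PseudoBL

/-- A pseudo BL-algebra satisfying inequalities (i)-(iii) has every
maximal filter normal. -/
theorem stmt_4 {A : Type*} [PseudoBL A]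
    (h1 : ∀ (n : ℕ), 1 ≤ n → ∀ (x : Fin n → A) (π : Equiv.Perm (Fin n)),
      lneg (List.ofFn x).prod ^ 2 ≤ lneg (List.ofFn (fun i => x (π i) ^ 2)).prod)
    (h2 : ∀ (n : ℕ), 1 ≤ n → ∀ x y : A,
      lneg (PseudoBL.himp x y ^ n) ^ 2 ≤ lneg (PseudoBL.rimp x y ^ (2 * n)))
    (h3 : ∀ (n : ℕ), 1 ≤ n → ∀ x y : A,
      lneg (PseudoBL.rimp x y ^ n) ^ 2 ≤ lneg (PseudoBL.himp x y ^ (2 * n))) :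
    ∀ F : Set A, IsMaximalFilter F → IsNormalFilter F := by
  intro F hF x y
  exact ⟨fun h => hF.mem_of_lneg_pow_sq_le h1 h (h3 · · x y),
    fun h => hF.mem_of_lneg_pow_sq_le h1 h (h2 · · x y)⟩
end

section
/- Let A be a pseudo BL-algebra satisfying ((x₁·⋯·xₖ)⁻)² ≤ (x_{σ(1)}²·⋯·x_{σ(k)}²)⁻ for all k ≥ 1, all elements x₁, …, xₖ and all permutations σ of {1, …, k}. If V is a maximal filter of A and x ∈ A with x ∉ V, then there exist v ∈ V and n ∈ ℕ, n ≥ 1, such that v·xⁿ = 0 and xⁿ·v = 0. -/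
open PseudoBL

set_option linter.unusedSectionVars false


theorem perm_exists_perm {α : Type*} {l l' : List α} (h : l.Perm l') :
    ∃ σ : Equiv.Perm (Fin l.length), l' = List.ofFn (fun i => l.get (σ i)) := by
  induction h with
  | nil => exact ⟨Equiv.refl _, by simp⟩
  | cons a h ih =>
      obtain ⟨σ', hσ'⟩ := ih
      refine ⟨Equiv.Perm.decomposeFin.symm (0, σ'), ?_⟩
      rw [List.ofFn_succ]
      simp [Equiv.Perm.decomposeFin_symm_apply_zero,
        Equiv.Perm.decomposeFin_symm_apply_succ, Equiv.swap_self, hσ']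
  | swap a b l =>
      refine ⟨(Equiv.swap 0 1 : Equiv.Perm (Fin (l.length + 1 + 1))), ?_⟩
      rw [List.ofFn_succ, List.ofFn_succ]
      have h2 : ∀ i : Fin l.length,
          (Equiv.swap (0 : Fin (l.length + 1 + 1)) 1) i.succ.succ = i.succ.succ := by
        intro i
        refine Equiv.swap_apply_of_ne_of_ne (Fin.succ_ne_zero _) ?_
        have : (1 : Fin (l.length + 1 + 1)) = (0 : Fin (l.length + 1)).succ := rfl
        rw [this]
        exact fun hc => Fin.succ_ne_zero _ (Fin.succ_injective _ hc)
      simp [h2, Equiv.swap_apply_left, Equiv.swap_apply_right, List.ofFn_get]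
  | trans h₁ h₂ ih₁ ih₂ =>
      rename_i l₁ l₂ l₃
      obtain ⟨σ₁, hσ₁⟩ := ih₁
      obtain ⟨σ₂, hσ₂⟩ := ih₂
      have hlen : _ = _ := h₁.length_eq
      refine ⟨((finCongr hlen).trans (σ₂.trans (finCongr hlen.symm))).trans σ₁, ?_⟩
      have hg : ∀ (j : Fin l₂.length), l₂.get j
          = l₁.get (σ₁ (Fin.cast (by rw [hσ₁]; simp) j)) := by
        intro j
        rw [List.get_of_eq hσ₁ j, List.get_ofFn]
        exact congrArg (fun z => l₁.get (σ₁ z)) (Fin.ext (by simp))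
      rw [hσ₂]
      apply List.ext_getElem (by simp [h₂.length_eq.symm, h₁.length_eq.symm])
      intro i hi hi'
      simp only [List.getElem_ofFn]
      rw [hg]
      exact congrArg (fun z => l₁.get (σ₁ z)) (Fin.ext (by simp))

section MyAux

variable {A : Type*} [PseudoBL A]

theorem my_mul_le_mul {a b c d : A} (h1 : a ≤ b) (h2 : c ≤ d) : a * c ≤ b * d := by
  have hbd : a * d ≤ b * d :=
    (PseudoBL.mul_le_iff_himp a d (b * d)).mpr
      (le_trans h1 ((PseudoBL.mul_le_iff_himp b d (b * d)).mp le_rfl))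
  have hac : a * c ≤ a * d :=
    (PseudoBL.mul_le_iff_rimp a c (a * d)).mpr
      (le_trans h2 ((PseudoBL.mul_le_iff_rimp a d (a * d)).mp le_rfl))
  exact le_trans hac hbd

theorem my_eq_zero_of_le_zero {a : A} (h : a ≤ 0) : a = 0 :=
  le_antisymm h (PseudoBL.zero_le a)

theorem my_le_lneg_zero : (1 : A) ≤ lneg (0 : A) :=
  (PseudoBL.mul_le_iff_himp 1 0 0).mp (by rw [one_mul])

theorem my_eq_zero_of_one_le_lneg {a : A} (h : (1 : A) ≤ lneg a) : a = 0 := by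
  have : (1 : A) * a ≤ 0 := (PseudoBL.mul_le_iff_himp 1 a 0).mpr h
  rw [one_mul] at this
  exact my_eq_zero_of_le_zero this

theorem my_one_mem {F : Set A} (hF : IsFilter F) : (1 : A) ∈ F := by
  obtain ⟨a, ha⟩ := hF.1
  exact hF.2.2 a ha 1 (PseudoBL.le_one a)

theorem my_eq_univ_of_zero_mem {F : Set A} (hF : IsFilter F) (h0 : (0 : A) ∈ F) :
    F = Set.univ :=
  Set.eq_univ_of_forall fun y => hF.2.2 0 h0 y (PseudoBL.zero_le y)

theorem my_prod_mem {F : Set A} (hF : IsFilter F) :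
    ∀ l : List A, (∀ t ∈ l, t ∈ F) → l.prod ∈ F := by
  intro l
  induction l with
  | nil => intro _; simpa using my_one_mem hF
  | cons h t ih =>
      intro hl
      rw [List.prod_cons]
      exact hF.2.1 h (hl h (by simp)) t.prod (ih fun u hu => hl u (by simp [hu]))

theorem my_split_list {V : Set A} {x : A} :
    ∀ l : List A, (∀ t ∈ l, t ∈ V ∨ t = x) →
      ∃ (a : List A) (n : ℕ), (∀ t ∈ a, t ∈ V) ∧ l.Perm (a ++ List.replicate n x) := by
  intro l
  induction l with
  | nil => exact fun _ => ⟨[], 0, by simp, by simp⟩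
  | cons h t ih =>
      intro hl
      obtain ⟨a, n, ha, hp⟩ := ih fun u hu => hl u (by simp [hu])
      rcases hl h (by simp) with hv | rfl
      · refine ⟨h :: a, n, ?_, ?_⟩
        · intro u hu
          rcases List.mem_cons.mp hu with rfl | hu
          · exact hv
          · exact ha u hu
        · simpa using hp.cons h
      · refine ⟨a, n + 1, ha, ?_⟩
        rw [List.replicate_succ]
        exact (hp.cons h).trans List.perm_middle.symm

end MyAux



/-- In a pseudo BL-algebra satisfying inequality (i), for a maximal
filter `V` and `x ∉ V`, there are `v ∈ V` and `n ≥ 1` with `v·xⁿ = 0 = xⁿ·v`. -/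
theorem stmt_7 {A : Type*} [PseudoBL A]
    (h1 : ∀ (k : ℕ), 1 ≤ k → ∀ (x : Fin k → A) (σ : Equiv.Perm (Fin k)),
      lneg (List.ofFn x).prod ^ 2 ≤ lneg (List.ofFn (fun i => x (σ i) ^ 2)).prod)
    (V : Set A) (hV : IsMaximalFilter V) (x : A) (hx : x ∉ V) :
    ∃ v ∈ V, ∃ n : ℕ, 1 ≤ n ∧ v * x ^ n = 0 ∧ x ^ n * v = 0 := by
  obtain ⟨hF, hproper, hmax⟩ := hV
  have h1V : (1 : A) ∈ V := my_one_mem hF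
  have hnz : (0 : A) ∉ V := fun h0 => hproper (my_eq_univ_of_zero_mem hF h0)
  set G : Set A := {y | ∃ l : List A, (∀ t ∈ l, t ∈ V ∨ t = x) ∧ l.prod ≤ y} with hG
  have hGfil : IsFilter G := by
    refine ⟨⟨1, [], by simp, by simp⟩, ?_, ?_⟩
    · rintro a ⟨la, hla, hpa⟩ b ⟨lb, hlb, hpb⟩
      refine ⟨la ++ lb, ?_, ?_⟩
      · intro t ht
        rcases List.mem_append.mp ht with h | h
        · exact hla t h
        · exact hlb t h
      · rw [List.prod_append]
        exact my_mul_le_mul hpa hpb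
    · rintro a ⟨la, hla, hpa⟩ y hay
      exact ⟨la, hla, le_trans hpa hay⟩
  have hVG : V ⊆ G := fun v hv => ⟨[v], by simp [hv], by simp⟩
  have hxG : x ∈ G := ⟨[x], by simp, by simp⟩
  have hGuniv : G = Set.univ := by
    by_contra hne
    exact hx ((hmax G hGfil hne hVG) ▸ hxG)
  have h0G : (0 : A) ∈ G := hGuniv ▸ Set.mem_univ 0
  obtain ⟨l, hl, hl0⟩ := h0G
  have hlprod : l.prod = 0 := my_eq_zero_of_le_zero hl0
  obtain ⟨a, n, ha, hperm⟩ := my_split_list l hl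
  have key : ∀ L : List A, l.Perm L → (L.map (fun t => t ^ 2)).prod = 0 := by
    intro L hP
    obtain ⟨σ, hσ⟩ := perm_exists_perm hP
    have hk : 1 ≤ l.length := by
      cases l with
      | nil =>
          exfalso
          have h10 : (1 : A) = 0 := by simpa using hlprod
          exact hnz (h10 ▸ h1V)
      | cons _ _ => simp
    have hmain := h1 l.length hk l.get σ
    rw [List.ofFn_get, hlprod] at hmain
    have h1le : (1 : A) ≤ lneg (0 : A) ^ 2 := by
      rw [pow_two]
      calc (1 : A) = 1 * 1 := (one_mul 1).symm
        _ ≤ lneg 0 * lneg 0 := my_mul_le_mul my_le_lneg_zero my_le_lneg_zero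
    have hz : (List.ofFn fun i => l.get (σ i) ^ 2).prod = 0 :=
      my_eq_zero_of_one_le_lneg (le_trans h1le hmain)
    rw [hσ, List.map_ofFn]
    exact hz
  set v : A := (a.map (fun t => t ^ 2)).prod with hv
  have hvV : v ∈ V := by
    refine my_prod_mem hF _ ?_
    intro t ht
    obtain ⟨u, hu, rfl⟩ := List.mem_map.mp ht
    rw [pow_two]
    exact hF.2.1 u (ha u hu) u (ha u hu)
  have e1 : v * x ^ (2 * n) = 0 := by
    have := key (a ++ List.replicate n x) hperm
    rw [List.map_append, List.prod_append, List.map_replicate, List.prod_replicate] at this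
    rw [pow_mul]
    exact this
  have e2 : x ^ (2 * n) * v = 0 := by
    have := key (List.replicate n x ++ a) (hperm.trans List.perm_append_comm)
    rw [List.map_append, List.prod_append, List.map_replicate, List.prod_replicate] at this
    rw [pow_mul]
    exact this
  have hn : 1 ≤ n := by
    rcases Nat.eq_zero_or_pos n with rfl | h
    · exfalso
      have : v = 0 := by simpa using e1
      exact hnz (this ▸ hvV)
    · exact h
  exact ⟨v, hvV, 2 * n, by omega, e1, e2⟩
end

section
/- Let A be a pseudo BL-algebra satisfying the identities (x→y)⁻ = (x⇝y)⁻ and (x→y)·(x⇝y) = (x⇝y)·(x→y) for all x, y ∈ A. Then ((x→y)ⁿ)⁻ = ((x⇝y)ⁿ)⁻ for every integer n ≥ 1 and all x, y ∈ A. -/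
open PseudoBL

/-- If `a⁻ = b⁻` then `(c·a)⁻ = (c·b)⁻`. -/
lemma lneg_mul_swap {A : Type*} [PseudoBL A] {a b : A} (h : lneg a = lneg b) (c : A) :
    lneg (c * a) = lneg (c * b) := by
  have H : ∀ u v : A, lneg u = lneg v → ∀ z : A, z ≤ lneg (c * u) → z ≤ lneg (c * v) := by
    intro u v huv z hz
    have h1 : z * (c * u) ≤ 0 := (PseudoBL.mul_le_iff_himp _ _ _).2 hz
    have h2 : (z * c) * u ≤ 0 := by rwa [mul_assoc]
    have h3 : z * c ≤ lneg u := (PseudoBL.mul_le_iff_himp _ _ _).1 h2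
    rw [huv] at h3
    have h4 : (z * c) * v ≤ 0 := (PseudoBL.mul_le_iff_himp _ _ _).2 h3
    rw [mul_assoc] at h4
    exact (PseudoBL.mul_le_iff_himp _ _ _).1 h4
  exact le_antisymm (H a b h _ le_rfl) (H b a h.symm _ le_rfl)

/-- In a pseudo BL-algebra satisfying `(x→y)⁻ = (x⇝y)⁻` and
`(x→y)·(x⇝y) = (x⇝y)·(x→y)`, one has `((x→y)ⁿ)⁻ = ((x⇝y)ⁿ)⁻` for all `n ≥ 1`. -/
theorem stmt_8 {A : Type*} [PseudoBL A]
    (hneg : ∀ x y : A, lneg (PseudoBL.himp x y) = lneg (PseudoBL.rimp x y))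
    (hcomm : ∀ x y : A,
      PseudoBL.himp x y * PseudoBL.rimp x y = PseudoBL.rimp x y * PseudoBL.himp x y)
    (n : ℕ) (hn : 1 ≤ n) (x y : A) :
    lneg (PseudoBL.himp x y ^ n) = lneg (PseudoBL.rimp x y ^ n) := by
  set a := PseudoBL.himp x y
  set b := PseudoBL.rimp x y
  have hc : Commute a b := hcomm x y
  have key : ∀ k m : ℕ, lneg (a ^ k * b ^ m) = lneg (b ^ (k + m)) := by
    intro k
    induction k with
    | zero => intro m; simp
    | succ k ih =>
      intro m
      have e1 : a ^ (k + 1) * b ^ m = (b ^ m * a ^ k) * a := by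
        rw [(hc.pow_pow (k + 1) m).eq, pow_succ, mul_assoc]
      have e2 : (b ^ m * a ^ k) * b = a ^ k * b ^ (m + 1) := by
        rw [← (hc.pow_pow k m).eq, mul_assoc, ← pow_succ]
      calc lneg (a ^ (k + 1) * b ^ m) = lneg ((b ^ m * a ^ k) * a) := by rw [e1]
      _ = lneg ((b ^ m * a ^ k) * b) := lneg_mul_swap (hneg x y) _
      _ = lneg (a ^ k * b ^ (m + 1)) := by rw [e2]
      _ = lneg (b ^ (k + 1 + m)) := by rw [ih (m + 1)]; ring_nf
  have := key n 0
  simpa using this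
end

section
/- Let (A, u) be a unital basic pseudo hoop in which every maximal filter is normal, and let x₁, …, xₙ ∈ A (n ≥ 1). If (x₁·⋯·xₙ)→u ∈ V for every maximal filter V of A, then x₁²·⋯·xₙ² ≤ u. -/
/-- A pseudo hoop: a monoid `(A; ·, 1)` with two implications `→` (`himp`) and
`⇝` (`rimp`) satisfying the pseudo-hoop identities, where the induced order
`x ≤ y ↔ x→y = 1 ↔ x⇝y = 1` is the given partial order. -/
class PseudoHoop (A : Type*) extends Monoid A, PartialOrder A where
  himp : A → A → A
  rimp : A → A → A
  himp_self : ∀ x : A, himp x x = 1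
  rimp_self : ∀ x : A, rimp x x = 1
  himp_mul : ∀ x y z : A, himp (x * y) z = himp x (himp y z)
  rimp_mul : ∀ x y z : A, rimp (x * y) z = rimp y (rimp x z)
  div₁ : ∀ x y : A, himp x y * x = himp y x * y
  div₂ : ∀ x y : A, himp x y * x = x * rimp x y
  div₃ : ∀ x y : A, x * rimp x y = y * rimp y x
  le_iff_himp : ∀ x y : A, x ≤ y ↔ himp x y = 1
  le_iff_rimp : ∀ x y : A, x ≤ y ↔ rimp x y = 1

/-- A basic pseudo hoop: a pseudo hoop satisfying (B1) and (B2). -/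
class BasicPseudoHoop (A : Type*) extends PseudoHoop A where
  basic₁ : ∀ x y z : A,
    himp (himp x y) z ≤ himp (himp (himp y x) z) z
  basic₂ : ∀ x y z : A,
    rimp (rimp x y) z ≤ rimp (rimp (rimp y x) z) z

namespace PseudoHoop

variable {A : Type*} [PseudoHoop A]

/-- A filter: a nonempty subset closed under `·` and upward closed. -/
def IsFilter (F : Set A) : Prop :=
  F.Nonempty ∧ (∀ x ∈ F, ∀ y ∈ F, x * y ∈ F) ∧ ∀ x ∈ F, ∀ y : A, x ≤ y → y ∈ F

/-- A maximal filter: a proper filter not properly contained in any proper filter. -/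
def IsMaximalFilter (F : Set A) : Prop :=
  IsFilter F ∧ F ≠ Set.univ ∧
    ∀ G : Set A, IsFilter G → G ≠ Set.univ → F ⊆ G → F = G

/-- A normal filter: `x→y ∈ F` iff `x⇝y ∈ F`. -/
def IsNormalFilter (F : Set A) : Prop :=
  ∀ x y : A, himp x y ∈ F ↔ rimp x y ∈ F

/-- The filter generated by an element `a`: all `x` with `aᵏ ≤ x` for some `k ≥ 1`. -/
def genFilter (a : A) : Set A := {x : A | ∃ k : ℕ, 1 ≤ k ∧ a ^ k ≤ x}

/-- A strong unit: an element generating the whole pseudo hoop as a filter. -/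
def IsStrongUnit (u : A) : Prop := genFilter u = Set.univ

end PseudoHoop

open PseudoHoop

namespace PseudoHoop

variable {A : Type*} [PseudoHoop A]

theorem le_himp_iff {x y z : A} : x ≤ himp y z ↔ x * y ≤ z := by
  rw [le_iff_himp x (himp y z), ← himp_mul, ← le_iff_himp]

theorem le_rimp_iff {x y z : A} : y ≤ rimp x z ↔ x * y ≤ z := by
  rw [le_iff_rimp y (rimp x z), ← rimp_mul, ← le_iff_rimp]

theorem himp_mul_le (x y : A) : himp x y * x ≤ y := le_himp_iff.mp le_rfl

theorem mul_rimp_le (x y : A) : x * rimp x y ≤ y := le_rimp_iff.mp le_rfl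

theorem rimp_one_left (x : A) : rimp 1 x = x := by
  apply le_antisymm
  · have := mul_rimp_le 1 x; simpa using this
  · rw [le_rimp_iff, one_mul]

theorem le_one (x : A) : x ≤ 1 := by
  rw [le_iff_rimp]
  have h1 : x * rimp x 1 = x := by
    rw [div₃ x 1, rimp_one_left, one_mul]
  have h2 : rimp (x * rimp x 1) 1 = rimp (rimp x 1) (rimp x 1) := by
    rw [rimp_mul]
  rw [h1, rimp_self] at h2
  exact h2

theorem himp_one_left (x : A) : himp 1 x = x := by
  apply le_antisymm
  · have := himp_mul_le 1 x; simpa using this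
  · rw [le_himp_iff, mul_one]

theorem mul_le_mul' {a b c d : A} (h1 : a ≤ b) (h2 : c ≤ d) : a * c ≤ b * d := by
  have hbc : b * c ≤ b * d := le_rimp_iff.mp (le_trans h2 (le_rimp_iff.mpr le_rfl))
  have hac : a * c ≤ b * c := le_himp_iff.mp (le_trans h1 (le_himp_iff.mpr le_rfl))
  exact le_trans hac hbc

theorem mul_le_left (x y : A) : x * y ≤ x := by
  have := mul_le_mul' (le_refl x) (le_one y); simpa using this

theorem mul_le_right (x y : A) : x * y ≤ y := by
  have := mul_le_mul' (le_one x) (le_refl y); simpa using this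

theorem himp_le_himp_right {y z : A} (x : A) (h : y ≤ z) : himp x y ≤ himp x z :=
  le_himp_iff.mpr (le_trans (himp_mul_le x y) h)

theorem himp_le_himp_left {x y : A} (h : x ≤ y) (z : A) : himp y z ≤ himp x z :=
  le_himp_iff.mpr (le_trans (mul_le_mul' le_rfl h) (himp_mul_le y z))

theorem rimp_le_rimp_right {y z : A} (x : A) (h : y ≤ z) : rimp x y ≤ rimp x z :=
  le_rimp_iff.mpr (le_trans (mul_rimp_le x y) h)

theorem rimp_le_rimp_left {x y : A} (h : x ≤ y) (z : A) : rimp y z ≤ rimp x z :=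
  le_rimp_iff.mpr (le_trans (mul_le_mul' h le_rfl) (mul_rimp_le y z))

theorem le_himp_self (x y : A) : y ≤ himp x y := le_himp_iff.mpr (mul_le_left y x)

theorem le_rimp_self (x y : A) : y ≤ rimp x y := le_rimp_iff.mpr (mul_le_right x y)

theorem himp_eq_one {x y : A} (h : x ≤ y) : himp x y = 1 := (le_iff_himp x y).mp h

theorem rimp_eq_one {x y : A} (h : x ≤ y) : rimp x y = 1 := (le_iff_rimp x y).mp h

/-- The meet. -/
theorem inf_le_left (x y : A) : himp x y * x ≤ x := mul_le_right _ _

theorem inf_le_right (x y : A) : himp x y * x ≤ y := himp_mul_le _ _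

theorem mul_rimp_eq_of_le {z x : A} (h : z ≤ x) : x * rimp x z = z := by
  rw [div₃ x z, rimp_eq_one h, mul_one]

theorem le_inf {z x y : A} (hx : z ≤ x) (hy : z ≤ y) : z ≤ himp x y * x := by
  rw [div₂]
  calc z = x * rimp x z := (mul_rimp_eq_of_le hx).symm
    _ ≤ x * rimp x y := mul_le_mul' le_rfl (rimp_le_rimp_right x hy)

theorem himp_mul_eq_of_le {z x : A} (h : z ≤ x) : himp x z * x = z :=
  le_antisymm (inf_le_right x z) (le_inf h le_rfl)

end PseudoHoop

namespace PseudoHoop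
variable {A : Type*} [PseudoHoop A]

/-- The join candidate. -/
def jn (x y : A) : A :=
  himp (rimp (himp x y) y) (rimp (himp y x) x) * rimp (himp x y) y

theorem le_jn_left (x y : A) : x ≤ jn x y := by
  apply le_inf
  · exact le_rimp_iff.mpr (himp_mul_le x y)
  · exact le_rimp_iff.mpr (mul_le_right _ _)

theorem le_jn_right (x y : A) : y ≤ jn x y := by
  apply le_inf
  · exact le_rimp_iff.mpr (mul_le_right _ _)
  · exact le_rimp_iff.mpr (himp_mul_le y x)

end PseudoHoop

namespace PseudoHoop
variable {A : Type*} [BasicPseudoHoop A]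

theorem case_law (x y z : A) :
    himp (himp x y) z * himp (himp y x) z ≤ z :=
  le_himp_iff.mp (BasicPseudoHoop.basic₁ x y z)

theorem jn_le {x y w : A} (hx : x ≤ w) (hy : y ≤ w) : jn x y ≤ w := by
  set c := himp x y with hc
  set d := himp y x with hd
  set j := jn x y with hj
  have h1 : j ≤ rimp c y := inf_le_left _ _
  have h2 : j ≤ rimp d x := inf_le_right _ _
  have hcw : c ≤ himp j w := by
    rw [le_himp_iff]
    calc c * j ≤ c * rimp c y := mul_le_mul' le_rfl h1
      _ ≤ y := mul_rimp_le _ _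
      _ ≤ w := hy
  have hdw : d ≤ himp j w := by
    rw [le_himp_iff]
    calc d * j ≤ d * rimp d x := mul_le_mul' le_rfl h2
      _ ≤ x := mul_rimp_le _ _
      _ ≤ w := hx
  have hb := BasicPseudoHoop.basic₁ x y (himp j w)
  rw [← hc, ← hd, himp_eq_one hcw, himp_eq_one hdw, himp_one_left] at hb
  have : himp j w = 1 := le_antisymm (le_one _) hb
  exact (le_iff_himp j w).mpr this

theorem jn_mono {a b a' b' : A} (h1 : a ≤ a') (h2 : b ≤ b') : jn a b ≤ jn a' b' :=
  jn_le (le_trans h1 (le_jn_left a' b')) (le_trans h2 (le_jn_right a' b'))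

theorem jn_comm (x y : A) : jn x y = jn y x :=
  le_antisymm (jn_le (le_jn_right y x) (le_jn_left y x))
    (jn_le (le_jn_right x y) (le_jn_left x y))

theorem jn_self_le (x : A) : jn x x ≤ x := jn_le le_rfl le_rfl

/-- Prelinearity for `→`. -/
theorem prelinear_himp (x y : A) : jn (himp x y) (himp y x) = 1 := by
  set w := jn (himp x y) (himp y x) with hw
  have hcw : himp x y ≤ w := le_jn_left _ _
  have hdw : himp y x ≤ w := le_jn_right _ _
  have hb := BasicPseudoHoop.basic₁ x y w
  rw [himp_eq_one hcw, himp_eq_one hdw, himp_one_left] at hb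
  exact le_antisymm (le_one _) hb

/-- Prelinearity for `⇝`. -/
theorem prelinear_rimp (x y : A) : jn (rimp x y) (rimp y x) = 1 := by
  set w := jn (rimp x y) (rimp y x) with hw
  have hcw : rimp x y ≤ w := le_jn_left _ _
  have hdw : rimp y x ≤ w := le_jn_right _ _
  have hb := BasicPseudoHoop.basic₂ x y w
  rw [rimp_eq_one hcw, rimp_eq_one hdw, rimp_one_left] at hb
  exact le_antisymm (le_one _) hb

theorem mul_jn_le (z x y : A) : z * jn x y ≤ jn (z * x) (z * y) := by
  rw [← le_rimp_iff]
  exact jn_le (le_rimp_iff.mpr (le_jn_left _ _)) (le_rimp_iff.mpr (le_jn_right _ _))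

theorem jn_mul_le (x y z : A) : jn x y * z ≤ jn (x * z) (y * z) := by
  rw [← le_himp_iff]
  exact jn_le (le_himp_iff.mpr (le_jn_left _ _)) (le_himp_iff.mpr (le_jn_right _ _))

theorem pow_jn_one {c d : A} (h : jn c d = 1) : ∀ k : ℕ, jn (c ^ k) d = 1 := by
  intro k
  induction k with
  | zero =>
    refine le_antisymm (le_one _) ?_
    have := le_jn_left ((1:A)) d
    simpa using this
  | succ k ih =>
    refine le_antisymm (le_one _) ?_
    have step1 : (1 : A) ≤ jn (c ^ k) d * jn c d := by rw [ih, h]; simp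
    have step2 : jn (c ^ k) d * jn c d ≤ jn (c ^ k * jn c d) (d * jn c d) :=
      jn_mul_le _ _ _
    have step3 : c ^ k * jn c d ≤ jn (c ^ (k + 1)) d := by
      calc c ^ k * jn c d ≤ jn (c ^ k * c) (c ^ k * d) := mul_jn_le _ _ _
        _ ≤ jn (c ^ (k + 1)) d := by
            rw [← pow_succ]
            exact jn_mono le_rfl (mul_le_right _ _)
    have step4 : d * jn c d ≤ jn (c ^ (k + 1)) d :=
      le_trans (mul_le_left _ _) (le_jn_right _ _)
    calc (1 : A) ≤ jn (c ^ k * jn c d) (d * jn c d) := le_trans step1 step2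
      _ ≤ jn (c ^ (k + 1)) d := jn_le step3 step4

/-- The main "game": if `c ∨ d = 1`, some power of `c` is `≤ u`, and some
power of `u` is `≤ d`, then `d = 1`. -/
theorem game {c d u : A} (h1 : jn c d = 1) (h2 : ∃ m : ℕ, c ^ m ≤ u)
    (h3 : ∃ k : ℕ, u ^ k ≤ d) : d = 1 := by
  obtain ⟨m, hm⟩ := h2
  obtain ⟨k, hk⟩ := h3
  have e1 : jn (c ^ m) d = 1 := pow_jn_one h1 m
  have e2 : jn u d = 1 := by
    refine le_antisymm (le_one _) ?_
    rw [← e1]; exact jn_mono hm le_rfl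
  have e3 : jn (u ^ k) d = 1 := pow_jn_one (by rw [jn_comm] at e2 ⊢; exact e2) k
  refine le_antisymm (le_one _) ?_
  calc (1 : A) = jn (u ^ k) d := e3.symm
    _ ≤ jn d d := jn_mono hk le_rfl
    _ ≤ d := jn_self_le d

end PseudoHoop

namespace PseudoHoop
variable {A : Type*} [PseudoHoop A]

theorem IsFilter.mem_of_le {F : Set A} (hF : IsFilter F) {x y : A}
    (hx : x ∈ F) (h : x ≤ y) : y ∈ F := hF.2.2 x hx y h

theorem IsFilter.mul_mem {F : Set A} (hF : IsFilter F) {x y : A}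
    (hx : x ∈ F) (hy : y ∈ F) : x * y ∈ F := hF.2.1 x hx y hy

theorem IsFilter.one_mem {F : Set A} (hF : IsFilter F) : (1 : A) ∈ F := by
  obtain ⟨x, hx⟩ := hF.1
  exact hF.mem_of_le hx (le_one x)

theorem IsFilter.pow_mem {F : Set A} (hF : IsFilter F) {x : A} (hx : x ∈ F) :
    ∀ k : ℕ, x ^ k ∈ F := by
  intro k
  induction k with
  | zero => simpa using hF.one_mem
  | succ k ih => rw [pow_succ]; exact hF.mul_mem ih hx

theorem isFilter_genFilter (a : A) : IsFilter (genFilter a) := by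
  refine ⟨⟨a, 1, le_rfl, by simp⟩, ?_, ?_⟩
  · rintro x ⟨k, hk1, hk⟩ y ⟨m, hm1, hm⟩
    exact ⟨k + m, le_trans hk1 (Nat.le_add_right _ _),
      by rw [pow_add]; exact mul_le_mul' hk hm⟩
  · rintro x ⟨k, hk1, hk⟩ y hxy
    exact ⟨k, hk1, le_trans hk hxy⟩

theorem self_mem_genFilter (a : A) : a ∈ genFilter a := ⟨1, le_rfl, by simp⟩

theorem eq_univ_of_unit_mem {u : A} (hu : IsStrongUnit u) {F : Set A}
    (hF : IsFilter F) (hmem : u ∈ F) : F = Set.univ := by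
  apply Set.eq_univ_of_forall
  intro x
  have hx : x ∈ genFilter u := by rw [hu]; trivial
  obtain ⟨k, _, hk⟩ := hx
  exact hF.mem_of_le (hF.pow_mem hmem k) hk

theorem unit_not_mem_of_maximal {u : A} (hu : IsStrongUnit u) {V : Set A}
    (hV : IsMaximalFilter V) : u ∉ V := fun h =>
  hV.2.1 (eq_univ_of_unit_mem hu hV.1 h)

/-- Zorn: every filter not containing the strong unit extends to a maximal filter. -/
theorem exists_maximalFilter {u : A} (hu : IsStrongUnit u) {F : Set A}
    (hF : IsFilter F) (hFu : u ∉ F) : ∃ M : Set A, IsMaximalFilter M ∧ F ⊆ M := by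
  set S : Set (Set A) := {G | IsFilter G ∧ u ∉ G} with hS
  have hzorn := zorn_subset_nonempty S ?_ F ⟨hF, hFu⟩
  · obtain ⟨M, hFM, hM⟩ := hzorn
    refine ⟨M, ⟨hM.prop.1, ?_, ?_⟩, hFM⟩
    · intro hMuniv
      exact hM.prop.2 (by rw [hMuniv]; trivial)
    · intro G hG hGuniv hMG
      have hGu : u ∉ G := fun h => hGuniv (eq_univ_of_unit_mem hu hG h)
      exact le_antisymm hMG (hM.2 ⟨hG, hGu⟩ hMG)
  · intro c hcS hchain hcne
    obtain ⟨G0, hG0⟩ := hcne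
    refine ⟨⋃₀ c, ⟨⟨?_, ?_, ?_⟩, ?_⟩, fun s hs => Set.subset_sUnion_of_mem hs⟩
    · exact ⟨1, G0, hG0, (hcS hG0).1.one_mem⟩
    · rintro x ⟨G1, hG1, hx⟩ y ⟨G2, hG2, hy⟩
      rcases eq_or_ne G1 G2 with rfl | hne
      · exact ⟨G1, hG1, (hcS hG1).1.mul_mem hx hy⟩
      · rcases hchain hG1 hG2 hne with h | h
        · exact ⟨G2, hG2, (hcS hG2).1.mul_mem (h hx) hy⟩
        · exact ⟨G1, hG1, (hcS hG1).1.mul_mem hx (h hy)⟩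
    · rintro x ⟨G1, hG1, hx⟩ y hxy
      exact ⟨G1, hG1, (hcS hG1).1.mem_of_le hx hxy⟩
    · rintro ⟨G1, hG1, hu1⟩
      exact (hcS hG1).2 hu1

/-- If `c * r ≤ u` where `r` lies in every maximal filter, then some power of
`c` is below `u`. -/
theorem exists_pow_le_left {u c r : A} (hu : IsStrongUnit u)
    (hr : ∀ V : Set A, IsMaximalFilter V → r ∈ V) (hbr : c * r ≤ u) :
    ∃ m : ℕ, c ^ m ≤ u := by
  by_cases hmem : u ∈ genFilter c
  · obtain ⟨m, _, hm⟩ := hmem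
    exact ⟨m, hm⟩
  · obtain ⟨M, hM, hFM⟩ := exists_maximalFilter hu (isFilter_genFilter c) hmem
    exfalso
    have hcM : c ∈ M := hFM (self_mem_genFilter c)
    have huM : u ∈ M := hM.1.mem_of_le (hM.1.mul_mem hcM (hr M hM)) hbr
    exact unit_not_mem_of_maximal hu hM huM

theorem exists_pow_le_right {u c r : A} (hu : IsStrongUnit u)
    (hr : ∀ V : Set A, IsMaximalFilter V → r ∈ V) (hbr : r * c ≤ u) :
    ∃ m : ℕ, c ^ m ≤ u := by
  by_cases hmem : u ∈ genFilter c
  · obtain ⟨m, _, hm⟩ := hmem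
    exact ⟨m, hm⟩
  · obtain ⟨M, hM, hFM⟩ := exists_maximalFilter hu (isFilter_genFilter c) hmem
    exfalso
    have hcM : c ∈ M := hFM (self_mem_genFilter c)
    have huM : u ∈ M := hM.1.mem_of_le (hM.1.mul_mem (hr M hM) hcM) hbr
    exact unit_not_mem_of_maximal hu hM huM

theorem exists_unit_pow_le {u : A} (hu : IsStrongUnit u) (d : A) :
    ∃ k : ℕ, u ^ k ≤ d := by
  have hd : d ∈ genFilter u := by rw [hu]; trivial
  obtain ⟨k, _, hk⟩ := hd
  exact ⟨k, hk⟩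

end PseudoHoop

namespace PseudoHoop
variable {A : Type*} [BasicPseudoHoop A]

theorem map_sq_prod_le (l : List A) : (l.map (fun y => y ^ 2)).prod ≤ l.prod := by
  induction l with
  | nil => simp
  | cons z l ih =>
    simp only [List.map_cons, List.prod_cons]
    refine mul_le_mul' ?_ ih
    calc z ^ 2 = z * z := sq z
      _ ≤ z * 1 := mul_le_mul' le_rfl (le_one z)
      _ = z := mul_one z

theorem list_prod_mem {F : Set A} (hF : IsFilter F) :
    ∀ L : List A, (∀ y ∈ L, y ∈ F) → L.prod ∈ F := by
  intro L
  induction L with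
  | nil => intro _; simpa using hF.one_mem
  | cons z L ih =>
    intro hmem
    rw [List.prod_cons]
    exact hF.mul_mem (hmem z (by simp)) (ih fun y hy => hmem y (by simp [hy]))

end PseudoHoop


/-- In a unital basic pseudo hoop `(A, u)` whose every maximal filter
is normal, if `(x₁⋯xₙ)→u` lies in every maximal filter, then `x₁²⋯xₙ² ≤ u`. -/
theorem stmt_14 {A : Type*} [BasicPseudoHoop A] (u : A) (hu : IsStrongUnit u)
    (hnorm : ∀ F : Set A, IsMaximalFilter F → IsNormalFilter F)
    (n : ℕ) (hn : 1 ≤ n) (x : Fin n → A)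
    (h : ∀ V : Set A, IsMaximalFilter V → PseudoHoop.himp (List.ofFn x).prod u ∈ V) :
    (List.ofFn (fun i => x i ^ 2)).prod ≤ u := by
  classical
  set xs : List A := List.ofFn x with hxs
  set sq : A → A := fun y => y ^ 2 with hsq
  have hq_eq : (List.ofFn (fun i => x i ^ 2)).prod = (xs.map sq).prod := by
    rw [hxs, List.map_ofFn]; rfl
  rw [hq_eq]
  set p : A := xs.prod with hp
  set q : A := (xs.map sq).prod with hq
  set a : A := himp p u with ha
  -- the generator set: one generator per split of the list xs
  set CSet : Set A := {c | ∃ l₁ x₀ l₂, xs = l₁ ++ x₀ :: l₂ ∧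
    c = himp (himp (x₀ * (l₂.map sq).prod) u) ((l₁.map sq).prod * x₀)} with hCSet
  -- the filter generated by CSet
  set Fs : Set A := {z | ∃ L : List A, (∀ c ∈ L, c ∈ CSet) ∧ L.prod ≤ z} with hFs
  have hFsFilter : IsFilter Fs := by
    refine ⟨⟨1, [], by simp, by simp⟩, ?_, ?_⟩
    · rintro z ⟨L1, hL1, hle1⟩ w ⟨L2, hL2, hle2⟩
      refine ⟨L1 ++ L2, ?_, ?_⟩
      · intro c hc
        rcases List.mem_append.mp hc with hc | hc
        · exact hL1 c hc
        · exact hL2 c hc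
      · rw [List.prod_append]; exact mul_le_mul' hle1 hle2
    · rintro z ⟨L1, hL1, hle1⟩ w hzw
      exact ⟨L1, hL1, le_trans hle1 hzw⟩
  -- the key split identity : q = X * R
  have hsplit_q : ∀ l₁ x₀ l₂, xs = l₁ ++ x₀ :: l₂ →
      q = ((l₁.map sq).prod * x₀) * (x₀ * (l₂.map sq).prod) := by
    intro l₁ x₀ l₂ hx
    rw [hq, hx]
    simp only [List.map_append, List.map_cons, List.prod_append, List.prod_cons, hsq]
    rw [pow_two]
    simp [mul_assoc]
  have hsplit_p : ∀ l₁ x₀ l₂, xs = l₁ ++ x₀ :: l₂ →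
      p = l₁.prod * (x₀ * l₂.prod) := by
    intro l₁ x₀ l₂ hx
    rw [hp, hx]
    simp [List.prod_append, List.prod_cons]
  -- STEP F : u ∈ Fs
  have hu_mem : u ∈ Fs := by
    by_contra hu_not
    obtain ⟨M, hM, hFM⟩ := exists_maximalFilter hu hFsFilter hu_not
    have haM : a ∈ M := h M hM
    -- single step of the loop
    have step : ∀ l₁ x₀ l₂, xs = l₁ ++ x₀ :: l₂ → (∀ y ∈ l₁, y ∈ M) → x₀ ∈ M := by
      intro l₁ x₀ l₂ hx hl₁
      set R : A := x₀ * (l₂.map sq).prod with hR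
      set Z : A := himp R u with hZ
      set X : A := (l₁.map sq).prod * x₀ with hX
      have hCmem : himp Z X ∈ M := by
        refine hFM ⟨[himp Z X], ?_, by simp⟩
        intro c hc
        rw [List.mem_singleton] at hc
        subst hc
        exact ⟨l₁, x₀, l₂, hx, rfl⟩
      have hZlow : a * l₁.prod ≤ Z := by
        rw [hZ, PseudoHoop.le_himp_iff]
        calc (a * l₁.prod) * R = a * (l₁.prod * R) := by rw [mul_assoc]
          _ ≤ a * (l₁.prod * (x₀ * l₂.prod)) := by
              refine mul_le_mul' le_rfl (mul_le_mul' le_rfl ?_)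
              rw [hR]
              exact mul_le_mul' le_rfl (map_sq_prod_le l₂)
          _ = a * p := by rw [hsplit_p l₁ x₀ l₂ hx]
          _ ≤ u := himp_mul_le p u
      have hZM : Z ∈ M :=
        hM.1.mem_of_le (hM.1.mul_mem haM (list_prod_mem hM.1 l₁ hl₁)) hZlow
      have hXM : X ∈ M :=
        hM.1.mem_of_le (hM.1.mul_mem hCmem hZM) (himp_mul_le Z X)
      have hXle : X ≤ x₀ := by
        rw [hX]
        calc (l₁.map sq).prod * x₀ ≤ 1 * x₀ := mul_le_mul' (le_one _) le_rfl
          _ = x₀ := one_mul x₀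
      exact hM.1.mem_of_le hXM hXle
    -- loop over the list
    have haux : ∀ l₂ l₁, xs = l₁ ++ l₂ → (∀ y ∈ l₁, y ∈ M) → ∀ y ∈ l₂, y ∈ M := by
      intro l₂
      induction l₂ with
      | nil => intro l₁ _ _ y hy; simp at hy
      | cons x₀ l₂ ih =>
        intro l₁ hx hl₁ y hy
        have hx₀M : x₀ ∈ M := step l₁ x₀ l₂ hx hl₁
        rcases List.mem_cons.mp hy with rfl | hy'
        · exact hx₀M
        · refine ih (l₁ ++ [x₀]) (by rw [hx]; simp) ?_ y hy'
          intro z hz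
          rcases List.mem_append.mp hz with hz | hz
          · exact hl₁ z hz
          · rw [List.mem_singleton] at hz; subst hz; exact hx₀M
    have hallM : ∀ y ∈ xs, y ∈ M := haux xs [] (by simp) (by simp)
    have hpM : p ∈ M := list_prod_mem hM.1 xs hallM
    have huM : u ∈ M := hM.1.mem_of_le (hM.1.mul_mem haM hpM) (himp_mul_le p u)
    exact unit_not_mem_of_maximal hu hM huM
  -- obtain a word below q → u
  have hFuniv : Fs = Set.univ := eq_univ_of_unit_mem hu hFsFilter hu_mem
  have hτ : himp q u ∈ Fs := by rw [hFuniv]; trivial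
  obtain ⟨L, hLC, hLle⟩ := hτ
  -- STEP D : the basic machine for one generator
  have hmachine : ∀ c ∈ CSet, q ≤ jn u (c * q) := by
    rintro c ⟨l₁, x₀, l₂, hx, rfl⟩
    set R : A := x₀ * (l₂.map sq).prod with hR
    set Z : A := himp R u with hZ
    set X : A := (l₁.map sq).prod * x₀ with hX
    have hsplit := hsplit_q l₁ x₀ l₂ hx
    have hpre : jn (himp X Z) (himp Z X) = 1 := prelinear_himp X Z
    calc q = X * R := hsplit
      _ = (jn (himp X Z) (himp Z X) * X) * R := by rw [hpre, one_mul]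
      _ ≤ (jn (himp X Z * X) (himp Z X * X)) * R :=
          mul_le_mul' (jn_mul_le _ _ _) le_rfl
      _ ≤ jn (himp X Z * X * R) (himp Z X * X * R) := jn_mul_le _ _ _
      _ ≤ jn u (himp Z X * q) := by
          refine jn_mono ?_ ?_
          · calc himp X Z * X * R ≤ Z * R := mul_le_mul' (himp_mul_le X Z) le_rfl
              _ ≤ u := himp_mul_le R u
          · rw [mul_assoc, ← hsplit]
  -- STEP E : iterate over words
  have hword : ∀ L' : List A, (∀ c ∈ L', c ∈ CSet) → q ≤ jn u (L'.prod * q) := by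
    intro L'
    induction L' with
    | nil =>
      intro _
      rw [List.prod_nil, one_mul]
      exact le_jn_right u q
    | cons c L' ih =>
      intro hmem
      have hc : c ∈ CSet := hmem c (by simp)
      have ihh : q ≤ jn u (L'.prod * q) := ih fun d hd => hmem d (by simp [hd])
      have h2 : c * q ≤ jn u (c * (L'.prod * q)) := by
        calc c * q ≤ c * jn u (L'.prod * q) := mul_le_mul' le_rfl ihh
          _ ≤ jn (c * u) (c * (L'.prod * q)) := mul_jn_le _ _ _
          _ ≤ jn u (c * (L'.prod * q)) := jn_mono (mul_le_right c u) le_rfl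
      calc q ≤ jn u (c * q) := hmachine c hc
        _ ≤ jn u (jn u (c * (L'.prod * q))) := jn_mono le_rfl h2
        _ ≤ jn u (c * (L'.prod * q)) := jn_le (le_jn_left _ _) le_rfl
        _ = jn u ((c :: L').prod * q) := by rw [List.prod_cons, mul_assoc]
  -- FINISH
  have h1 : q ≤ jn u (L.prod * q) := hword L hLC
  have h2 : L.prod * q ≤ u :=
    le_trans (mul_le_mul' hLle le_rfl) (himp_mul_le q u)
  calc q ≤ jn u (L.prod * q) := h1
    _ ≤ jn u u := jn_mono le_rfl h2
    _ ≤ u := jn_le le_rfl le_rfl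
end
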